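/- arXiv:1406.1721 — 3 statements merged into one kernel-verified Lean document; each statement's English description precedes it below -/
import Mathlib

section
/- Let K be a field of characteristic ≠ 2, n ≥ 1, and t : Fin n → K with t i ≠ 0 for all i and (t i)^2 ≠ (t j)^2 for all i ≠ j. Let μ : Fin n → ℕ be antitone and set λ j = 2·μ j + (n − j). Then the sum over all sign vectors ε of det(M_ε) / ( (∏ i, ε i·t i) · ∏_{i<j} (ε i·t i + ε j·t j)·(ε j·t j − ε i·t i) ), where (M_ε) i j = (ε i · t i)^(λ j + (n − 1 − j)), equals 2^n · det(N) / ∏_{i<j} ((t j)^2 − (t i)^2), where N i j = ((t i)^2)^(μ j + (n − 1 − j)). (Pragacz–Ratajski for the odd orthogonal Grassmannian OG(n, 2n+1): ω_* s_λ(Q) = 2^n · s_μ(t_1^2,…,t_n^2).) -/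
open Finset

/-- The sign vector `ε : Fin n → K` associated to a boolean vector `s`:
`ε i = 1` if `s i = true` and `ε i = -1` otherwise. -/
def sgnv {K : Type*} [Ring K] {n : ℕ} (s : Fin n → Bool) : Fin n → K :=
  fun i => if s i then 1 else -1

/-!
Since `λ_j + n - 1 - j = 2 (μ_j + n - 1 - j) + 1`, each column of the numerator matrix at the
fixed point `ε` is an odd power of `ε_i t_i`. Pulling one factor `ε_i t_i` out of every row
cancels the Euler factor `∏ ε_i t_i`, and what remains, as well as
`(ε_i t_i + ε_j t_j)(ε_j t_j - ε_i t_i) = t_j² - t_i²`, depends only on the squares `t_i²`.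
So all `2^n` summands equal `det((t_i²)^(μ_j + n - 1 - j)) / ∏_{i<j} (t_j² - t_i²)`.
-/

lemma sgnv_mul_sq {K : Type*} [Ring K] {n : ℕ} (s : Fin n → Bool) (i : Fin n) (a : K) :
    (sgnv s i * a) ^ 2 = a ^ 2 := by
  unfold sgnv
  cases s i <;> simp

lemma sgnv_mul_ne_zero {K : Type*} [Ring K] [NoZeroDivisors K] {n : ℕ} (s : Fin n → Bool)
    (i : Fin n) {a : K} (ha : a ≠ 0) : sgnv s i * a ≠ 0 := by
  unfold sgnv
  cases s i <;> simpa using ha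

lemma det_pow_two_mul_add_one {R : Type*} [CommRing R] {n : ℕ} (x : Fin n → R)
    (e : Fin n → ℕ) :
    (Matrix.of fun i j => x i ^ (2 * e j + 1)).det
      = (∏ i, x i) * (Matrix.of fun i j => (x i ^ 2) ^ e j).det := by
  rw [← Matrix.det_mul_column]
  congr 1
  ext i j
  simp only [Matrix.of_apply, pow_succ, pow_mul]
  ring

lemma det_pow_odd_div_eq_det_sq_div {K : Type*} [Field K] {n : ℕ} (x : Fin n → K)
    (hx : ∀ i, x i ≠ 0) (e : Fin n → ℕ) :
    (Matrix.of fun i j => x i ^ (2 * e j + 1)).det /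
        ((∏ i, x i) * ∏ i, ∏ j ∈ Ioi i, (x i + x j) * (x j - x i))
      = (Matrix.of fun i j => (x i ^ 2) ^ e j).det /
          ∏ i, ∏ j ∈ Ioi i, (x j ^ 2 - x i ^ 2) := by
  have hden : ∀ i j, (x i + x j) * (x j - x i) = x j ^ 2 - x i ^ 2 := fun i j => by ring
  simp only [hden, det_pow_two_mul_add_one]
  exact mul_div_mul_left _ _ (prod_ne_zero_iff.2 fun i _ => hx i)

theorem pushforward_schur_OG_odd_general (K : Type*) [Field K]
    (n : ℕ)
    (t : Fin n → K) (ht : ∀ i, t i ≠ 0)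
    (μ : Fin n → ℕ)
    (lam : Fin n → ℕ) (hlam : ∀ j : Fin n, lam j = 2 * μ j + (n - (j : ℕ))) :
    ∑ s : Fin n → Bool,
      (Matrix.of fun i j : Fin n =>
          (sgnv (K := K) s i * t i) ^ (lam j + (n - 1 - (j : ℕ)))).det /
        ((∏ i, sgnv (K := K) s i * t i) *
          ∏ i, ∏ j ∈ Ioi i,
            (sgnv (K := K) s i * t i + sgnv (K := K) s j * t j) *
              (sgnv (K := K) s j * t j - sgnv (K := K) s i * t i))
      = 2 ^ n *
          (Matrix.of fun i j : Fin n => ((t i) ^ 2) ^ (μ j + (n - 1 - (j : ℕ)))).det /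
          ∏ i, ∏ j ∈ Ioi i, ((t j) ^ 2 - (t i) ^ 2) := by
  have hexp : ∀ j : Fin n, lam j + (n - 1 - (j : ℕ)) = 2 * (μ j + (n - 1 - (j : ℕ))) + 1 := by
    intro j
    have := j.isLt
    rw [hlam]
    omega
  calc _ = ∑ _s : Fin n → Bool,
          (Matrix.of fun i j : Fin n => ((t i) ^ 2) ^ (μ j + (n - 1 - (j : ℕ)))).det /
            ∏ i, ∏ j ∈ Ioi i, ((t j) ^ 2 - (t i) ^ 2) := sum_congr rfl fun s _ => by
        simp only [hexp]
        rw [det_pow_odd_div_eq_det_sq_div _ fun i => sgnv_mul_ne_zero s i (ht i)]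
        simp only [sgnv_mul_sq]
    _ = _ := by
        rw [sum_const, card_univ, Fintype.card_fun, Fintype.card_bool, Fintype.card_fin,
          nsmul_eq_mul, mul_div_assoc]
        norm_cast

/-- Pragacz–Ratajski for the odd orthogonal Grassmannian `OG(n, 2n+1)`:
for `λ = 2μ + ρ(n)`, the fixed-point sum for `s_λ(Q)` equals
`2^n · det((t_i²)^(μ_j + n − 1 − j)) / ∏_{i<j} (t_j² − t_i²)`. -/
theorem pushforward_schur_OG_odd (K : Type*) [Field K] (hK : (2 : K) ≠ 0)
    (n : ℕ) (hn : 1 ≤ n)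
    (t : Fin n → K) (ht : ∀ i, t i ≠ 0)
    (ht2 : ∀ i j : Fin n, i ≠ j → (t i) ^ 2 ≠ (t j) ^ 2)
    (μ : Fin n → ℕ) (hμ : Antitone μ)
    (lam : Fin n → ℕ) (hlam : ∀ j : Fin n, lam j = 2 * μ j + (n - (j : ℕ))) :
    ∑ s : Fin n → Bool,
      (Matrix.of fun i j : Fin n =>
          (sgnv (K := K) s i * t i) ^ (lam j + (n - 1 - (j : ℕ)))).det /
        ((∏ i, sgnv (K := K) s i * t i) *
          ∏ i, ∏ j ∈ Ioi i,
            (sgnv (K := K) s i * t i + sgnv (K := K) s j * t j) *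
              (sgnv (K := K) s j * t j - sgnv (K := K) s i * t i))
      = 2 ^ n *
          (Matrix.of fun i j : Fin n => ((t i) ^ 2) ^ (μ j + (n - 1 - (j : ℕ)))).det /
          ∏ i, ∏ j ∈ Ioi i, ((t j) ^ 2 - (t i) ^ 2) :=
  pushforward_schur_OG_odd_general K n t ht μ lam hlam
end

section
/- Let K be a field of characteristic ≠ 2, n ≥ 1, and t : Fin n → K with t i ≠ 0 for all i and (t i)^2 ≠ (t j)^2 for all i ≠ j. Let λ : Fin n → ℕ be antitone and suppose there exists j ∈ Fin n such that λ j + (n − 1 − j) is even. Then the sum over all sign vectors ε of det(M_ε) / ( (∏ i, ε i·t i) · ∏_{i<j} (ε i·t i + ε j·t j)·(ε j·t j − ε i·t i) ), where (M_ε) i j = (ε i · t i)^(λ j + (n − 1 − j)), equals 0. (Vanishing part of the Pragacz–Ratajski theorem for OG(n, 2n+1): the push-forward of s_λ(Q) is nonzero only if λ = 2μ + ρ(n).) -/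
open Finset

theorem Matrix.det_of_sum_rows {R ι α : Type*} [CommRing R] [Fintype ι] [DecidableEq ι]
    [Fintype α] (g : ι → α → ι → R) :
    (Matrix.of fun i j => ∑ a, g i a j).det =
      ∑ r : ι → α, (Matrix.of fun i j => g i (r i) j).det := by
  have hrows : (Matrix.of fun i j => ∑ a, g i a j) = fun i => ∑ a, g i a := by
    ext i j; simp [Finset.sum_apply]
  rw [hrows]
  exact (Matrix.detRowAlternating : (ι → R) [⋀^ι]→ₗ[R] R).map_sum g

section

variable {R : Type*} {n : ℕ}

lemma sgnv_mul_self [Ring R] (s : Fin n → Bool) (i : Fin n) :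
    sgnv (K := R) s i * sgnv (K := R) s i = 1 := by
  unfold sgnv; cases s i <;> simp

lemma prod_sgnv_mul_self [CommRing R] (s : Fin n → Bool) :
    (∏ i, sgnv (K := R) s i) * ∏ i, sgnv (K := R) s i = 1 := by
  rw [← prod_mul_distrib]
  exact prod_eq_one fun i _ => sgnv_mul_self s i

lemma sum_prod_sgnv_mul_det_eq_det_sub [CommRing R] (t : Fin n → R) (e : Fin n → ℕ) :
    ∑ s : Fin n → Bool, (∏ i, sgnv (K := R) s i) *
        (Matrix.of fun i j => (sgnv (K := R) s i * t i) ^ e j).det =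
      (Matrix.of fun i j => t i ^ e j - (-t i) ^ e j).det := by
  have hexpand := Matrix.det_of_sum_rows fun i (b : Bool) j =>
    (if b then 1 else -1 : R) * ((if b then 1 else -1) * t i) ^ e j
  simp only [Fintype.sum_bool, Bool.false_eq_true, if_true, if_false, one_mul, neg_mul,
    ← sub_eq_add_neg] at hexpand
  rw [hexpand]
  -- despite its name, `Matrix.det_mul_column` pulls a scalar out of each row
  exact sum_congr rfl fun s _ => (Matrix.det_mul_column _ _).symm

theorem sum_prod_sgnv_mul_det_eq_zero [CommRing R] (t : Fin n → R) (e : Fin n → ℕ)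
    {j₀ : Fin n} (he : Even (e j₀)) :
    ∑ s : Fin n → Bool, (∏ i, sgnv (K := R) s i) *
      (Matrix.of fun i j => (sgnv (K := R) s i * t i) ^ e j).det = 0 := by
  rw [sum_prod_sgnv_mul_det_eq_det_sub]
  exact Matrix.det_eq_zero_of_column_eq_zero j₀ fun i => by simp [he.neg_pow]

lemma prod_sgnv_mul_prod_Ioi [CommRing R] (s : Fin n → Bool) (t : Fin n → R) :
    (∏ i, sgnv (K := R) s i * t i) *
        ∏ i, ∏ j ∈ Ioi i,
          (sgnv (K := R) s i * t i + sgnv (K := R) s j * t j) *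
            (sgnv (K := R) s j * t j - sgnv (K := R) s i * t i) =
      (∏ i, sgnv (K := R) s i) * ((∏ i, t i) * ∏ i, ∏ j ∈ Ioi i, (t j ^ 2 - t i ^ 2)) := by
  have hpair : ∀ i j, (sgnv (K := R) s i * t i + sgnv (K := R) s j * t j) *
      (sgnv (K := R) s j * t j - sgnv (K := R) s i * t i) = t j ^ 2 - t i ^ 2 := fun i j => by
    linear_combination t j ^ 2 * sgnv_mul_self (R := R) s j - t i ^ 2 * sgnv_mul_self (R := R) s i
  simp only [hpair, prod_mul_distrib]
  ring

end

lemma div_mul_eq_mul_div_of_mul_self_eq_one {K : Type*} [Field K] {c : K} (hc : c * c = 1)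
    (x P : K) : x / (c * P) = c * x / P := by
  rw [div_eq_mul_inv, mul_inv, inv_eq_of_mul_eq_one_right hc, div_eq_mul_inv]
  ring

theorem pushforward_schur_OG_odd_vanishing_general (K : Type*) [Field K]
    (n : ℕ)
    (t : Fin n → K)
    (lam : Fin n → ℕ)
    (hpar : ∃ j : Fin n, Even (lam j + (n - 1 - (j : ℕ)))) :
    ∑ s : Fin n → Bool,
      (Matrix.of fun i j : Fin n =>
          (sgnv (K := K) s i * t i) ^ (lam j + (n - 1 - (j : ℕ)))).det /
        ((∏ i, sgnv (K := K) s i * t i) *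
          ∏ i, ∏ j ∈ Ioi i,
            (sgnv (K := K) s i * t i + sgnv (K := K) s j * t j) *
              (sgnv (K := K) s j * t j - sgnv (K := K) s i * t i))
      = 0 := by
  obtain ⟨j₀, hj₀⟩ := hpar
  simp only [prod_sgnv_mul_prod_Ioi,
    div_mul_eq_mul_div_of_mul_self_eq_one (prod_sgnv_mul_self _)]
  rw [← sum_div, sum_prod_sgnv_mul_det_eq_zero t (fun j => lam j + (n - 1 - (j : ℕ))) hj₀,
    zero_div]

/-- Vanishing part of the Pragacz–Ratajski theorem for `OG(n, 2n+1)`: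
if some `λ j + (n − 1 − j)` is even, the fixed-point sum for `s_λ(Q)` vanishes. -/
theorem pushforward_schur_OG_odd_vanishing (K : Type*) [Field K] (hK : (2 : K) ≠ 0)
    (n : ℕ) (hn : 1 ≤ n)
    (t : Fin n → K) (ht : ∀ i, t i ≠ 0)
    (ht2 : ∀ i j : Fin n, i ≠ j → (t i) ^ 2 ≠ (t j) ^ 2)
    (lam : Fin n → ℕ) (hlam : Antitone lam)
    (hpar : ∃ j : Fin n, Even (lam j + (n - 1 - (j : ℕ)))) :
    ∑ s : Fin n → Bool,
      (Matrix.of fun i j : Fin n =>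
          (sgnv (K := K) s i * t i) ^ (lam j + (n - 1 - (j : ℕ)))).det /
        ((∏ i, sgnv (K := K) s i * t i) *
          ∏ i, ∏ j ∈ Ioi i,
            (sgnv (K := K) s i * t i + sgnv (K := K) s j * t j) *
              (sgnv (K := K) s j * t j - sgnv (K := K) s i * t i))
      = 0 :=
  pushforward_schur_OG_odd_vanishing_general K n t lam hpar
end

section
/- Let K be a field of characteristic ≠ 2, n ≥ 1, and t : Fin n → K with t i ≠ 0 for all i. Let W ∈ MvPolynomial (Fin n) K be a polynomial such that every exponent vector k in the support of W has k i odd for every i ∈ Fin n. Then the sum over all sign vectors ε of (evaluation of W at the point i ↦ ε i · t i) / (∏ i, 2·ε i·t i) equals (evaluation of W at t) / (∏ i, t i). (Special case of the Section 4 push-forward formula for a polynomial whose every monomial has odd degree in each variable: ∫_{LG(n)} V = W(t_1,…,t_n) / (t_1⋯t_n · ∏_{i<j}(t_j^2 − t_i^2)).) -/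
/-!
Since every monomial of `W` is odd in each variable, substituting `ε i * t i` multiplies it by
`∏ i, ε i`, and this factor cancels against the same factor of the denominator. All `2 ^ n`
summands therefore equal `W(t) / (2 ^ n * ∏ i, t i)`.
-/

open Finset

theorem Odd.pow_eq_self_of_sq_eq_one {M : Type*} [Monoid M] {a : M} (ha : a ^ 2 = 1) {k : ℕ}
    (hk : Odd k) : a ^ k = a := by
  obtain ⟨m, rfl⟩ := hk
  rw [pow_succ, pow_mul, ha, one_pow, one_mul]

theorem MvPolynomial.eval_mul_of_sq_eq_one_of_odd {R σ : Type*} [CommRing R] [Fintype σ]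
    {W : MvPolynomial σ R} (hW : ∀ k ∈ W.support, ∀ i, Odd (k i))
    {ε : σ → R} (hε : ∀ i, ε i ^ 2 = 1) (t : σ → R) :
    eval (fun i => ε i * t i) W = (∏ i, ε i) * eval t W := by
  rw [eval_eq', eval_eq', mul_sum]
  refine sum_congr rfl fun k hk => ?_
  simp only [mul_pow, (hW k hk _).pow_eq_self_of_sq_eq_one (hε _), prod_mul_distrib]
  ring

section Sign

variable {K : Type*} {n : ℕ}

theorem sgnv_sq [Ring K] (s : Fin n → Bool) (i : Fin n) : sgnv (K := K) s i ^ 2 = 1 := by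
  unfold sgnv
  split <;> simp

theorem prod_sgnv_ne_zero [CommRing K] [Nontrivial K] (s : Fin n → Bool) :
    ∏ i, sgnv (K := K) s i ≠ 0 := by
  have h : (∏ i, sgnv (K := K) s i) ^ 2 = 1 := by simp only [← prod_pow, sgnv_sq, prod_const_one]
  exact ne_zero_pow two_ne_zero (h ▸ one_ne_zero)

end Sign

theorem pushforward_all_odd_general (K : Type*) [Field K] (hK : (2 : K) ≠ 0)
    (n : ℕ)
    (t : Fin n → K)
    (W : MvPolynomial (Fin n) K)
    (hW : ∀ k ∈ W.support, ∀ i : Fin n, Odd (k i)) :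
    ∑ s : Fin n → Bool,
      MvPolynomial.eval (fun i => sgnv (K := K) s i * t i) W /
        ∏ i, 2 * sgnv (K := K) s i * t i
      = MvPolynomial.eval t W / ∏ i, t i := by
  have summand_eq (s : Fin n → Bool) :
      MvPolynomial.eval (fun i => sgnv (K := K) s i * t i) W / ∏ i, 2 * sgnv (K := K) s i * t i
        = MvPolynomial.eval t W / (2 ^ n * ∏ i, t i) := by
    have denom_eq : ∏ i, 2 * sgnv (K := K) s i * t i = (∏ i, sgnv s i) * (2 ^ n * ∏ i, t i) := by
      simp only [prod_mul_distrib, prod_const, card_univ, Fintype.card_fin]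
      ring
    rw [MvPolynomial.eval_mul_of_sq_eq_one_of_odd hW (sgnv_sq s), denom_eq,
      mul_div_mul_left _ _ (prod_sgnv_ne_zero s)]
  rw [sum_congr rfl fun s _ => summand_eq s, sum_const, card_univ, Fintype.card_fun,
    Fintype.card_bool, Fintype.card_fin, nsmul_eq_mul, Nat.cast_pow, Nat.cast_two, mul_div_assoc',
    mul_div_mul_left _ _ (pow_ne_zero n hK)]

/-- Special case of the Section 4 push-forward formula: if every monomial of `W` has
odd exponent in each variable, the sign-vector sum equals `W(t) / ∏ i, t_i`. -/
theorem pushforward_all_odd (K : Type*) [Field K] (hK : (2 : K) ≠ 0)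
    (n : ℕ) (hn : 1 ≤ n)
    (t : Fin n → K) (ht : ∀ i, t i ≠ 0)
    (W : MvPolynomial (Fin n) K)
    (hW : ∀ k ∈ W.support, ∀ i : Fin n, Odd (k i)) :
    ∑ s : Fin n → Bool,
      MvPolynomial.eval (fun i => sgnv (K := K) s i * t i) W /
        ∏ i, 2 * sgnv (K := K) s i * t i
      = MvPolynomial.eval t W / ∏ i, t i :=
  pushforward_all_odd_general K hK n t W hW
end
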